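/- Fix an integer N ≥ 1, γ ∈ ℝ and λ ∈ ℂ^N. If f ∈ sol^γ_λ satisfies f(0) = 0, then f = 0 identically on ℝ^N. -/

import Mathlib

open scoped BigOperators
open MeasureTheory Complex

noncomputable section

abbrev Pt (N : ℕ) := Fin N → ℝ
abbrev Fn (N : ℕ) := Pt N → ℂ

/-- The permutation `w` acting on points: `(w • x) j = x (w⁻¹ j)`. -/
def permPt {N : ℕ} (w : Equiv.Perm (Fin N)) (x : Pt N) : Pt N := fun j => x (w⁻¹ j)

/-- The fundamental (positive) alcove `ℝ^N_+ = {x : x_1 > … > x_N}`. -/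
def posAlcove (N : ℕ) : Set (Pt N) := {x | ∀ i j : Fin N, i < j → x j < x i}

/-- The alcove `w⁻¹ ℝ^N_+`. -/
def alcove {N : ℕ} (w : Equiv.Perm (Fin N)) : Set (Pt N) := {x | permPt w x ∈ posAlcove N}

/-- Regular vectors: pairwise distinct coordinates. -/
def regPts (N : ℕ) : Set (Pt N) := {x | ∀ i j : Fin N, i ≠ j → x i ≠ x j}

/-- Partial derivative in the `j`-th coordinate. -/
def pd {N : ℕ} (j : Fin N) (f : Fn N) : Fn N :=
  fun x => deriv (fun t : ℝ => f (Function.update x j t)) (x j)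

/-- The plane wave `e^{iλ}`. -/
def planeWave {N : ℕ} (lam : Fin N → ℂ) : Fn N :=
  fun x => Complex.exp (Complex.I * ∑ j, lam j * (x j : ℂ))

/-- The integral operator `I_{jk}`:
`(I_{jk} f)(x) = ∫_0^{x_j-x_k} f(x - y(e_j - e_k)) dy`. -/
def Iop {N : ℕ} (j k : Fin N) (f : Fn N) : Fn N :=
  fun x => ∫ y in (0:ℝ)..(x j - x k),
    f (Function.update (Function.update x j (x j - y)) k (x k + y))

/-- The integral-reflection operator `s^γ` associated to the transposition `(j k)`. -/
def sIR {N : ℕ} (γ : ℝ) (j k : Fin N) (f : Fn N) : Fn N :=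
  fun x => f (permPt (Equiv.swap j k) x) + (γ : ℂ) * Iop j k f x

/-- The integral-reflection operator for the simple transposition `s_j = (j, j+1)`
(zero-based); identity for out-of-range `j`. -/
def sSimple {N : ℕ} (γ : ℝ) (j : ℕ) (f : Fn N) : Fn N :=
  if h : j + 1 < N then sIR γ ⟨j, Nat.lt_of_succ_lt h⟩ ⟨j + 1, h⟩ f else f

/-- `w^γ` computed from a word `L` of simple reflections:
`wordOp γ [i₁,…,i_l] f = s_{i₁}^γ (⋯ (s_{i_l}^γ f))`. -/
def wordOp {N : ℕ} (γ : ℝ) (L : List ℕ) (f : Fn N) : Fn N :=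
  L.foldr (fun j g => sSimple γ j g) f

/-- The simple transposition `s_j` (zero-based); identity for out-of-range `j`. -/
def simpleT (N : ℕ) (j : ℕ) : Equiv.Perm (Fin N) :=
  if h : j + 1 < N then Equiv.swap ⟨j, Nat.lt_of_succ_lt h⟩ ⟨j + 1, h⟩ else 1

/-- The permutation represented by a word of simple reflections. -/
def wordPerm (N : ℕ) (L : List ℕ) : Equiv.Perm (Fin N) := (L.map (simpleT N)).prod

/-- `P` is the propagation operator `P^γ_N`: for continuous `f`, `P f` is continuous and
on the alcove `w⁻¹ ℝ^N_+` it equals `(w^γ f)(w x)`, where `w^γ` may be computed from any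
word of simple reflections representing `w` (the operators `s_j^γ` satisfy the relations
of the symmetric group, so this does not depend on the word). -/
def IsPropagation {N : ℕ} (γ : ℝ) (P : Fn N → Fn N) : Prop :=
  ∀ f : Fn N, Continuous f →
    Continuous (P f) ∧
    ∀ (w : Equiv.Perm (Fin N)) (L : List ℕ),
      (∀ j ∈ L, j + 1 < N) → wordPerm N L = w →
      ∀ x ∈ alcove w, P f x = wordOp γ L f (permPt w x)

open scoped Classical in
/-- The operator `Λ_j` entering the Dunkl-type operator `∂_j^γ = ∂_j - γ Λ_j`. -/
def LambdaOp {N : ℕ} (j : Fin N) (f : Fn N) : Fn N := fun x =>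
  (∑ k : Fin N, if k < j ∧ x k < x j then f (permPt (Equiv.swap j k) x) else 0)
    - ∑ k : Fin N, if j < k ∧ x j < x k then f (permPt (Equiv.swap j k) x) else 0

/-- Membership in `CB^∞(ℝ^N)`: continuous, and smooth on every alcove. -/
def CBsmooth {N : ℕ} (f : Fn N) : Prop :=
  Continuous f ∧ ∀ w : Equiv.Perm (Fin N), ContDiffOn ℝ (⊤ : ℕ∞) f (alcove w)

/-- Membership in `sol^γ_λ`: lies in `CB^∞(ℝ^N)` and satisfies `∂_j^γ f = iλ_j f`
on the regular vectors for every `j`. -/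
def memSol {N : ℕ} (γ : ℝ) (lam : Fin N → ℂ) (f : Fn N) : Prop :=
  CBsmooth f ∧ ∀ j : Fin N, ∀ x ∈ regPts N,
    pd j f x - (γ : ℂ) * LambdaOp j f x = Complex.I * lam j * f x

open scoped Classical in
/-- Coxeter length = number of inversions. -/
def invCount {N : ℕ} (w : Equiv.Perm (Fin N)) : ℕ :=
  (Finset.univ.filter fun p : Fin N × Fin N => p.1 < p.2 ∧ w p.2 < w p.1).card

/-- `x + δ(e_j - e_k)`. -/
def jumpShift {N : ℕ} (j k : Fin N) (δ : ℝ) (x : Pt N) : Pt N :=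
  Function.update (Function.update x j (x j + δ)) k (x k - δ)

/-- The derivative jump conditions with coupling `γ`: at every subregular point of
every wall `{x_j = x_k}` (`j < k`), the jump of `(∂_j - ∂_k) f` equals `2γ f(x)`. -/
def SatisfiesJump {N : ℕ} (γ : ℝ) (f : Fn N) : Prop :=
  ∀ j k : Fin N, j < k → ∀ x : Pt N, x j = x k →
    (∀ l m : Fin N, l < m → ¬(l = j ∧ m = k) → x l ≠ x m) →
    Filter.Tendsto
      (fun δ : ℝ =>
        (pd j f (jumpShift j k δ x) - pd k f (jumpShift j k δ x))
          - (pd j f (jumpShift j k (-δ) x) - pd k f (jumpShift j k (-δ) x)))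
      (nhdsWithin 0 (Set.Ioi 0)) (nhds (2 * (γ : ℂ) * f x))

open scoped Classical in
/-- Indicator of a strictly decreasing chain of real numbers. -/
def chainInd (l : List ℝ) : ℂ := if List.Chain' (fun a b => b < a) l then 1 else 0

/-- Iterated integral entering `ê⁻_{μ;i}`: for the list `[i₁,…,i_n]`, the upper limit of
the `y_m`-integral is `x_{i_{m-1}}` (threaded through `ub`, starting at `x_{N+1}`), the lower
limit is `x_{i_m}`, and the coordinate `i_m` of the argument is replaced by `y_m`. -/
def eMinusAux {N : ℕ} (μ : ℂ) (f : Fn N) (x : Pt (N + 1)) :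
    List (Fin N) → ℝ → Pt N → ℂ
  | [], _, z => f z
  | i :: rest, ub, z =>
      ∫ y in (x i.castSucc)..ub,
        Complex.exp (Complex.I * μ * ((x i.castSucc - y : ℝ) : ℂ)) *
          eMinusAux μ f x rest (x i.castSucc) (Function.update z i y)

/-- The elementary creation operator `ê⁻_{μ;i}`. -/
def ehatMinus {N : ℕ} (μ : ℂ) (l : List (Fin N)) (f : Fn N) : Fn (N + 1) :=
  fun x =>
    chainInd (x (Fin.last N) :: l.map fun i => x i.castSucc) *
      Complex.exp (Complex.I * μ * ((x (Fin.last N) : ℝ) : ℂ)) *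
      eMinusAux μ f x l (x (Fin.last N)) (fun j => x j.castSucc)

/-- Iterated integral entering `ê⁺_{μ;i}`: the lower limit of the `y_m`-integral is
`x_{i_{m+1}+1}` (the coordinate of the next entry, or `x_1` at the end), the upper limit
is `x_{i_m+1}`, and the coordinate `i_m` of the argument is replaced by `y_m`. -/
def ePlusAux {N : ℕ} (μ : ℂ) (f : Fn N) (x : Pt (N + 1)) :
    List (Fin N) → Pt N → ℂ
  | [], z => f z
  | i :: rest, z =>
      ∫ y in (match rest with
              | [] => x 0
              | j :: _ => x j.succ)..(x i.succ),
        Complex.exp (Complex.I * μ * ((x i.succ - y : ℝ) : ℂ)) *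
          ePlusAux μ f x rest (Function.update z i y)

/-- The elementary creation operator `ê⁺_{μ;i}`. -/
def ehatPlus {N : ℕ} (μ : ℂ) (l : List (Fin N)) (f : Fn N) : Fn (N + 1) :=
  fun x =>
    chainInd ((l.map fun i => x i.succ) ++ [x 0]) *
      Complex.exp (Complex.I * μ * ((x 0 : ℝ) : ℂ)) *
      ePlusAux μ f x l (fun j => x j.succ)

/-- The non-symmetric creation operator
`b⁻_μ = ∑_{n=0}^N γⁿ ∑_{i ∈ 𝔦ⁿ_{[1,N]}} ê⁻_{μ;i}` (tuples of pairwise distinct indices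
are encoded as injections `Fin n ↪ Fin N`). -/
def bMinus {N : ℕ} (γ : ℝ) (μ : ℂ) (f : Fn N) : Fn (N + 1) :=
  fun x => ∑ n ∈ Finset.range (N + 1), (γ : ℂ) ^ n *
    ∑ e : Fin n ↪ Fin N, ehatMinus μ (List.ofFn ⇑e) f x

/-- The non-symmetric creation operator `b⁺_μ`. -/
def bPlus {N : ℕ} (γ : ℝ) (μ : ℂ) (f : Fn N) : Fn (N + 1) :=
  fun x => ∑ n ∈ Finset.range (N + 1), (γ : ℂ) ^ n *
    ∑ e : Fin n ↪ Fin N, ehatPlus μ (List.ofFn ⇑e) f x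

/-- `φ̌⁺`: evaluate the first coordinate at `x⁺`. -/
def phiCheckPlus {k : ℕ} (xp : ℝ) (f : Fn (k + 1)) : Fn k := fun x => f (Fin.cons xp x)

/-- `φ̌⁻`: evaluate the last coordinate at `x⁻`. -/
def phiCheckMinus {k : ℕ} (xm : ℝ) (f : Fn (k + 1)) : Fn k := fun x => f (Fin.snoc x xm)

/-- `b^ε_μ`, `ε = +` encoded as `true` and `ε = -` as `false`. -/
def bEps (ε : Bool) {k : ℕ} (γ : ℝ) (μ : ℂ) (f : Fn k) : Fn (k + 1) :=
  if ε then bPlus γ μ f else bMinus γ μ f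

/-- `ê^ε_{μ;i}`. -/
def ehatEps (ε : Bool) {N : ℕ} (μ : ℂ) (l : List (Fin N)) (f : Fn N) : Fn (N + 1) :=
  if ε then ehatPlus μ l f else ehatMinus μ l f

/-- `φ̌^ε`. -/
def phiEps (ε : Bool) {k : ℕ} (xp xm : ℝ) (f : Fn (k + 1)) : Fn k :=
  if ε then phiCheckPlus xp f else phiCheckMinus xm f

/-- `a^ε_μ = φ̌^ε ∘ b^ε_μ`. -/
def aEps (ε : Bool) {k : ℕ} (γ : ℝ) (xp xm : ℝ) (μ : ℂ) (f : Fn k) : Fn k :=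
  phiEps ε xp xm (bEps ε γ μ f)

/-- The sign `ε = ±1` of `ε ∈ {+,-}`. -/
def sgn (ε : Bool) : ℂ := if ε then 1 else -1

/-- `s⁺` (swap of the first two coordinates of `ℝ^{N+2}`) resp. `s⁻` (swap of the last two). -/
def sEps (ε : Bool) (N : ℕ) : Equiv.Perm (Fin (N + 2)) :=
  if ε then Equiv.swap 0 1 else Equiv.swap ⟨N, by omega⟩ ⟨N + 1, by omega⟩

/-- Iterated integral entering `č⁺_{μ;i}` (the variables `y_1,…,y_n`). -/
def cAuxPlus {N : ℕ} (μ : ℂ) (xp : ℝ) (x : Pt N) (g : Pt N → ℂ) :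
    List (Fin N) → Pt N → ℂ
  | [], z => g z
  | i :: rest, z =>
      ∫ y in (match rest with | [] => xp | j :: _ => x j)..(x i),
        Complex.exp (Complex.I * μ * ((x i - y : ℝ) : ℂ)) *
          cAuxPlus μ xp x g rest (Function.update z i y)

/-- The elementary operator `č⁺_{μ;i}` (with `x_{i_0} := x⁻` and `x_{i_{n+1}} := x⁺`;
the variable `y_0` is plugged in as the final argument of `f`). -/
def cCheckPlus {N : ℕ} (μ : ℂ) (xp xm : ℝ) (l : List (Fin N)) (f : Fn (N + 1)) : Fn N :=
  fun x =>
    chainInd (l.map x) * Complex.exp (Complex.I * μ * ((xp : ℝ) : ℂ)) *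
      ∫ y0 in (match l with | [] => xp | i :: _ => x i)..xm,
        Complex.exp (Complex.I * μ * ((xm - y0 : ℝ) : ℂ)) *
          cAuxPlus μ xp x (fun z => f (Fin.snoc z y0)) l x

/-- Iterated integral entering `č⁻_{μ;i}` (the variables `y_1,…,y_{n+1}`;
the variable `y_{n+1}` is plugged in as the first argument of `f`). -/
def cAuxMinus {N : ℕ} (μ : ℂ) (xp : ℝ) (x : Pt N) (f : Fn (N + 1)) :
    List (Fin N) → ℝ → Pt N → ℂ
  | [], ub, z =>
      ∫ y in xp..ub, Complex.exp (Complex.I * μ * ((xp - y : ℝ) : ℂ)) * f (Fin.cons y z)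
  | i :: rest, ub, z =>
      ∫ y in (x i)..ub,
        Complex.exp (Complex.I * μ * ((x i - y : ℝ) : ℂ)) *
          cAuxMinus μ xp x f rest (x i) (Function.update z i y)

/-- The elementary operator `č⁻_{μ;i}` (with `x_{i_0} := x⁻` and `x_{i_{n+1}} := x⁺`). -/
def cCheckMinus {N : ℕ} (μ : ℂ) (xp xm : ℝ) (l : List (Fin N)) (f : Fn (N + 1)) : Fn N :=
  fun x => chainInd (l.map x) * Complex.exp (Complex.I * μ * ((xm : ℝ) : ℂ)) *
    cAuxMinus μ xp x f l xm x

/-- `č^ε_{μ;i}`. -/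
def cCheckEps (ε : Bool) {N : ℕ} (μ : ℂ) (xp xm : ℝ) (l : List (Fin N)) (f : Fn (N + 1)) :
    Fn N :=
  if ε then cCheckPlus μ xp xm l f else cCheckMinus μ xp xm l f

/-- The operator `c⁺_μ = ∑_{n=0}^N γ^{n+1} ∑_i č⁺_{μ;i}`. -/
def cPlusOp {N : ℕ} (γ : ℝ) (μ : ℂ) (xp xm : ℝ) (f : Fn (N + 1)) : Fn N :=
  fun x => ∑ n ∈ Finset.range (N + 1), (γ : ℂ) ^ (n + 1) *
    ∑ e : Fin n ↪ Fin N, cCheckPlus μ xp xm (List.ofFn ⇑e) f x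

/-- The operator `c⁻_μ = ∑_{n=0}^N γ^{n+1} ∑_i č⁻_{μ;i}`. -/
def cMinusOp {N : ℕ} (γ : ℝ) (μ : ℂ) (xp xm : ℝ) (f : Fn (N + 1)) : Fn N :=
  fun x => ∑ n ∈ Finset.range (N + 1), (γ : ℂ) ^ (n + 1) *
    ∑ e : Fin n ↪ Fin N, cCheckMinus μ xp xm (List.ofFn ⇑e) f x

/-- `c^ε_μ`. -/
def cEps (ε : Bool) {N : ℕ} (γ : ℝ) (μ : ℂ) (xp xm : ℝ) (f : Fn (N + 1)) : Fn N :=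
  if ε then cPlusOp γ μ xp xm f else cMinusOp γ μ xp xm f

/-- The closed box `J^M = [x⁺,x⁻]^M`. -/
def box (M : ℕ) (xp xm : ℝ) : Set (Pt M) := {x | ∀ j, x j ∈ Set.Icc xp xm}

/-- The `L²(J^M)` inner product `⟨u,v⟩_M = ∫_{J^M} u · conj v`. -/
def ipJ {M : ℕ} (xp xm : ℝ) (u v : Fn M) : ℂ :=
  ∫ x in box M xp xm, u x * (starRingEnd ℂ) (v x)

/-- Smooth functions compactly supported in the open box `(x⁺,x⁻)^M`. -/
def IsTestFn {M : ℕ} (xp xm : ℝ) (f : Fn M) : Prop :=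
  ContDiff ℝ (⊤ : ℕ∞) f ∧ HasCompactSupport f ∧ ∀ x, f x ≠ 0 → ∀ j, x j ∈ Set.Ioo xp xm

/-- The symmetrizer `𝒮_N = (1/N!) ∑_{w ∈ S_N} w`. -/
def symN (N : ℕ) (f : Fn N) : Fn N :=
  fun x => (N.factorial : ℂ)⁻¹ * ∑ w : Equiv.Perm (Fin N), f (permPt w⁻¹ x)

open scoped Classical in
/-- `G^γ_μ = ∏_{j<k} (μ_j - μ_k - iγ)/(μ_j - μ_k)`. -/
def Gcoef {N : ℕ} (γ : ℝ) (mu : Fin N → ℂ) : ℂ :=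
  ∏ p ∈ Finset.univ.filter (fun p : Fin N × Fin N => p.1 < p.2),
    (mu p.1 - mu p.2 - Complex.I * (γ : ℂ)) / (mu p.1 - mu p.2)

/-- The decreasing rearrangement `x↓`. -/
def decRearrange {N : ℕ} (x : Pt N) : Pt N := fun j => x (Tuple.sort x (Fin.rev j))

/-- The Bethe wavefunction
`Ψ_λ(x) = (1/N!) ∑_{w ∈ S_N} G^γ_{wλ} exp(i ∑_j (wλ)_j (x↓)_j)`. -/
def Bethe {N : ℕ} (γ : ℝ) (lam : Fin N → ℂ) : Fn N :=
  fun x => (N.factorial : ℂ)⁻¹ * ∑ w : Equiv.Perm (Fin N),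
    Gcoef γ (fun j => lam (w⁻¹ j)) *
      Complex.exp (Complex.I * ∑ j, lam (w⁻¹ j) * ((decRearrange x j : ℝ) : ℂ))

/-- The transpositions of consecutive entries of a list:
`adjSwaps [a₁,…,a_m] = [(a₁ a₂), (a₂ a₃), …, (a_{m-1} a_m)]`. -/
def adjSwaps {M : ℕ} : List (Fin M) → List (Equiv.Perm (Fin M))
  | [] => []
  | [_] => []
  | a :: b :: rest => Equiv.swap a b :: adjSwaps (b :: rest)

/-- `b⁻_{λ_N} (b⁻_{λ_{N-1}} (⋯ (b⁻_{λ_1} 1)))`. -/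
def iterBMinus (γ : ℝ) : (N : ℕ) → (Fin N → ℂ) → Fn N
  | 0, _ => fun _ => 1
  | N + 1, lam => bMinus γ (lam (Fin.last N)) (iterBMinus γ N (fun j => lam j.castSucc))

/-- `b⁺_{λ_1} (b⁺_{λ_2} (⋯ (b⁺_{λ_N} 1)))`. -/
def iterBPlus (γ : ℝ) : (N : ℕ) → (Fin N → ℂ) → Fn N
  | 0, _ => fun _ => 1
  | N + 1, lam => bPlus γ (lam 0) (iterBPlus γ N (fun j => lam j.succ))

/-!
On an alcove `w⁻¹ ℝ^N_+`, every term of `Λ_j f` evaluates `f` on an alcove reached by undoing an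
inversion of `w`. By induction on `w` these terms vanish, so `f` solves `∂_j f = iλ_j f` there, and
`f = c · e^{iλ}` on the open convex alcove. Alcoves are cones with apex `0`, so continuity
gives `c = f 0 = 0`. Finally, regular points are dense.
-/

theorem apply_zero_eq_of_forall_pos_smul {E F : Type*} [NormedAddCommGroup E] [NormedSpace ℝ E]
    [TopologicalSpace F] [T2Space F] {f g : E → F} (hf : Continuous f) (hg : Continuous g)
    (x : E) (h : ∀ t : ℝ, 0 < t → f (t • x) = g (t • x)) : f 0 = g 0 := by
  have hray : ∀ φ : E → F, Continuous φ →
      Filter.Tendsto (fun t : ℝ => φ (t • x)) (nhdsWithin 0 (Set.Ioi 0)) (nhds (φ 0)) :=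
    fun φ hφ => by
      have hcont : Continuous fun t : ℝ => φ (t • x) :=
        hφ.comp (continuous_id.smul continuous_const)
      simpa using (hcont.tendsto 0).mono_left nhdsWithin_le_nhds
  refine tendsto_nhds_unique (hray f hf) ((hray g hg).congr' ?_)
  filter_upwards [self_mem_nhdsWithin] with t ht using (h t ht).symm

section

variable {N : ℕ}

theorem pd_eq_fderiv {f : Fn N} {x : Pt N} (hf : DifferentiableAt ℝ f x) (j : Fin N) :
    pd j f x = fderiv ℝ f x (Pi.single j 1) := by
  have hf' : HasFDerivAt f (fderiv ℝ f x) (Function.update x j (x j)) := by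
    rw [Function.update_eq_self]; exact hf.hasFDerivAt
  exact (hf'.comp_hasDerivAt (x j) (hasDerivAt_update x j (x j))).deriv

theorem fderiv_apply_eq_sum_pd {f : Fn N} {x : Pt N} (hf : DifferentiableAt ℝ f x) (v : Pt N) :
    fderiv ℝ f x v = ∑ j, (v j : ℂ) * pd j f x := by
  conv_lhs => rw [← Finset.univ_sum_single v, map_sum]
  refine Finset.sum_congr rfl fun j _ => ?_
  rw [pd_eq_fderiv hf, ← Complex.real_smul, ← map_smul, ← Pi.single_smul', smul_eq_mul, mul_one]

theorem exists_eqOn_const_mul_planeWave {f : Fn N} {lam : Fin N → ℂ} {U : Set (Pt N)}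
    (hU : IsOpen U) (hUc : Convex ℝ U) (hf : DifferentiableOn ℝ f U)
    (hpd : ∀ j, ∀ y ∈ U, pd j f y = Complex.I * lam j * f y) :
    ∃ c, ∀ y ∈ U, f y = c * planeWave lam y := by
  let L : Pt N →L[ℝ] ℂ :=
    ∑ j, lam j • Complex.ofRealCLM.comp (ContinuousLinearMap.proj (φ := fun _ : Fin N => ℝ) j)
  have hL : ∀ y, L y = ∑ j, lam j * (y j : ℂ) := fun y => by simp [L]
  let g : Fn N := fun y => f y * Complex.exp (-(Complex.I * L y))
  have hg : ∀ y ∈ U, HasFDerivAt g (0 : Pt N →L[ℝ] ℂ) y := by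
    intro y hy
    have hfy := (hf y hy).differentiableAt (hU.mem_nhds hy)
    have hE : HasFDerivAt (fun z => Complex.exp (-(Complex.I * L z)))
        (Complex.exp (-(Complex.I * L y)) • -(Complex.I • L)) y :=
      (L.hasFDerivAt.const_mul Complex.I).neg.cexp
    refine (hfy.hasFDerivAt.mul hE).congr_fderiv ?_
    ext v
    simp only [add_apply, smul_apply,
      neg_apply, zero_apply, smul_neg, smul_eq_mul, hL,
      fderiv_apply_eq_sum_pd hfy, hpd _ y hy, Finset.mul_sum]
    rw [neg_add_eq_zero]
    exact Finset.sum_congr rfl fun i _ => by ring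
  have hconst : ∀ y ∈ U, ∀ z ∈ U, g y = g z := fun y hy z hz =>
    hUc.is_const_of_fderivWithin_eq_zero
      (fun x hx => (hg x hx).differentiableAt.differentiableWithinAt)
      (fun x hx => by rw [fderivWithin_of_isOpen hU hx, (hg x hx).fderiv]) hy hz
  rcases U.eq_empty_or_nonempty with rfl | ⟨y₀, hy₀⟩
  · exact ⟨0, by simp⟩
  refine ⟨g y₀, fun y hy => ?_⟩
  rw [hconst y₀ hy₀ y hy]
  simp only [g, planeWave, ← hL, mul_assoc, ← Complex.exp_add, neg_add_cancel, Complex.exp_zero,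
    mul_one]

theorem permPt_mul (u v : Equiv.Perm (Fin N)) (x : Pt N) :
    permPt (u * v) x = permPt u (permPt v x) := by
  ext j; simp [permPt]

theorem mem_alcove_iff {w : Equiv.Perm (Fin N)} {y : Pt N} :
    y ∈ alcove w ↔ ∀ a b, w a < w b → y b < y a := by
  simp only [alcove, posAlcove, permPt, Set.mem_ofPred_eq]
  refine ⟨fun h a b hab => by simpa using h _ _ hab, fun h i j hij => h _ _ (by simpa using hij)⟩

theorem lt_iff_of_mem_alcove {w : Equiv.Perm (Fin N)} {y : Pt N} (hy : y ∈ alcove w)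
    {a b : Fin N} (hab : a ≠ b) : y a < y b ↔ w b < w a := by
  rw [mem_alcove_iff] at hy
  refine ⟨fun h => ?_, hy b a⟩
  rcases (w.injective.ne hab).lt_or_gt with hlt | hlt
  · exact absurd (hy a b hlt) h.not_gt
  · exact hlt

theorem permPt_mem_alcove {w : Equiv.Perm (Fin N)} {y : Pt N} (hy : y ∈ alcove w)
    (σ : Equiv.Perm (Fin N)) : permPt σ y ∈ alcove (w * σ⁻¹) := by
  simpa [alcove, ← permPt_mul] using hy

theorem alcove_subset_regPts (w : Equiv.Perm (Fin N)) : alcove w ⊆ regPts N := by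
  intro y hy a b hab
  rcases (w.injective.ne hab).lt_or_gt with hlt | hlt
  · exact ((mem_alcove_iff.1 hy) a b hlt).ne'
  · exact ((mem_alcove_iff.1 hy) b a hlt).ne

theorem exists_mem_alcove {x : Pt N} (hx : x ∈ regPts N) : ∃ w, x ∈ alcove w := by
  have hinj : Function.Injective x := fun a b h => by_contra fun hab => hx a b hab h
  set σ := Tuple.sort x
  have hmono : StrictMono (x ∘ σ) :=
    (Tuple.monotone_sort x).strictMono_of_injective (hinj.comp σ.injective)
  refine ⟨σ⁻¹.trans Fin.revPerm, mem_alcove_iff.2 fun a b hab => ?_⟩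
  simpa using hmono (Fin.rev_lt_rev.1 hab)

theorem isOpen_alcove (w : Equiv.Perm (Fin N)) : IsOpen (alcove w) := by
  have : alcove w = ⋂ p : Fin N × Fin N, {y : Pt N | w p.1 < w p.2 → y p.2 < y p.1} := by
    ext y; simp [mem_alcove_iff]
  rw [this]
  refine isOpen_iInter_of_finite fun p => ?_
  by_cases hp : w p.1 < w p.2
  · simpa [hp] using isOpen_lt (continuous_apply p.2) (continuous_apply p.1)
  · simp [hp]

theorem convex_alcove (w : Equiv.Perm (Fin N)) : Convex ℝ (alcove w) := by
  intro u hu v hv s t hs ht hst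
  rw [mem_alcove_iff] at hu hv ⊢
  intro a b hab
  simp only [Pi.add_apply, Pi.smul_apply, smul_eq_mul]
  rcases hs.lt_or_eq with hs | rfl
  · nlinarith [hu a b hab, hv a b hab]
  · obtain rfl : t = 1 := by linarith
    simpa using hv a b hab

theorem smul_mem_alcove {w : Equiv.Perm (Fin N)} {y : Pt N} (hy : y ∈ alcove w) {t : ℝ}
    (ht : 0 < t) : t • y ∈ alcove w := by
  rw [mem_alcove_iff] at hy ⊢
  intro a b hab
  simpa using mul_lt_mul_of_pos_left (hy a b hab) ht

/-- An induction measure on permutations which, like the Coxeter length `invCount`, drops when an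
inversion is undone by a transposition (`revWeight_mul_swap_lt`). -/
def revWeight (w : Equiv.Perm (Fin N)) : ℕ := ∑ i, (Fin.rev i : ℕ) * (w i : ℕ)

theorem revWeight_mul_swap_lt {w : Equiv.Perm (Fin N)} {a b : Fin N} (hab : a < b)
    (hw : w b < w a) : revWeight (w * Equiv.swap a b) < revWeight w := by
  have hdiff : (revWeight w : ℤ) - revWeight (w * Equiv.swap a b)
      = ((b : ℤ) - a) * ((w a : ℤ) - w b) := by
    simp only [revWeight, Nat.cast_sum, Nat.cast_mul, ← Finset.sum_sub_distrib,
      Equiv.Perm.coe_mul, Function.comp_apply]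
    rw [Fintype.sum_eq_add a b hab.ne fun i hi => by
      simp [Equiv.swap_apply_of_ne_of_ne hi.1 hi.2]]
    simp only [Equiv.swap_apply_left, Equiv.swap_apply_right, Fin.val_rev]
    push_cast [Nat.cast_sub (show (a : ℕ) + 1 ≤ N from a.isLt),
      Nat.cast_sub (show (b : ℕ) + 1 ≤ N from b.isLt)]
    ring
  have : (0 : ℤ) < ((b : ℤ) - a) * ((w a : ℤ) - w b) :=
    mul_pos (sub_pos.2 (by exact_mod_cast hab)) (sub_pos.2 (by exact_mod_cast hw))
  omega

theorem LambdaOp_eq_zero {f : Fn N} {y : Pt N}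
    (h : ∀ a b : Fin N, a < b → y a < y b → f (permPt (Equiv.swap a b) y) = 0) (j : Fin N) :
    LambdaOp j f y = 0 := by
  unfold LambdaOp
  rw [Finset.sum_eq_zero, Finset.sum_eq_zero, sub_zero]
  · intro k _
    split_ifs with hk
    · exact h j k hk.1 hk.2
    · rfl
  · intro k _
    split_ifs with hk
    · rw [Equiv.swap_comm]; exact h k j hk.1 hk.2
    · rfl

theorem dense_setOf_apply_ne {i j : Fin N} (hij : i ≠ j) : Dense {x : Pt N | x i ≠ x j} := by
  let H : Submodule ℝ (Pt N) :=
    LinearMap.ker (LinearMap.proj (R := ℝ) (φ := fun _ : Fin N => ℝ) i - LinearMap.proj j)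
  have hH : {x : Pt N | x i ≠ x j} = (H : Set (Pt N))ᶜ := by
    ext x; simp [H, sub_eq_zero]
  rw [hH, ← interior_eq_empty_iff_dense_compl, ← Set.not_nonempty_iff_eq_empty]
  intro hint
  have hsingle : (Pi.single i 1 : Pt N) ∈ H := by
    rw [H.eq_top_of_nonempty_interior' hint]; trivial
  simp [H, Ne.symm hij] at hsingle

theorem dense_regPts : Dense (regPts N) := by
  have hreg :
      regPts N = ⋂ p : {p : Fin N × Fin N // p.1 ≠ p.2}, {x : Pt N | x p.1.1 ≠ x p.1.2} := by
    ext x; simp [regPts]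
  rw [hreg]
  exact dense_iInter_of_isOpen (fun p => isOpen_ne_fun (continuous_apply _) (continuous_apply _))
    fun p => dense_setOf_apply_ne p.2

theorem memSol.eq_zero_on_alcove {γ : ℝ} {lam : Fin N → ℂ} {f : Fn N}
    (hf : memSol γ lam f) (h0 : f 0 = 0) (w : Equiv.Perm (Fin N)) : ∀ y ∈ alcove w, f y = 0 := by
  induction hw : revWeight w using Nat.strong_induction_on generalizing w with
  | _ n IH =>
  subst hw
  obtain ⟨⟨hfc, hfs⟩, heq⟩ := hf
  have hLam : ∀ y ∈ alcove w, ∀ j, LambdaOp j f y = 0 := fun y hy => LambdaOp_eq_zero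
    fun a b hab hyab => IH _ (revWeight_mul_swap_lt hab ((lt_iff_of_mem_alcove hy hab.ne).1 hyab))
      _ rfl _ (by simpa using permPt_mem_alcove hy (Equiv.swap a b))
  have hpd : ∀ j, ∀ y ∈ alcove w, pd j f y = Complex.I * lam j * f y := fun j y hy => by
    simpa [hLam y hy j] using heq j y (alcove_subset_regPts w hy)
  obtain ⟨c, hc⟩ := exists_eqOn_const_mul_planeWave (isOpen_alcove w) (convex_alcove w)
    ((hfs w).differentiableOn (by simp)) hpd
  intro y hy
  have hc0 : f 0 = c * planeWave lam 0 :=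
    apply_zero_eq_of_forall_pos_smul hfc (continuous_const.mul (by unfold planeWave; fun_prop)) y
      fun t ht => hc _ (smul_mem_alcove hy ht)
  have hc_zero : c = 0 := by simpa [planeWave, h0] using hc0.symm
  rw [hc y hy, hc_zero, zero_mul]

end

theorem statement_3_general (N : ℕ) (γ : ℝ) (lam : Fin N → ℂ)
    (f : Fn N) (hf : memSol γ lam f) (h0 : f (fun _ => 0) = 0) :
    ∀ x : Pt N, f x = 0 := by
  have hreg : ∀ x ∈ regPts N, f x = 0 := fun x hx => by
    obtain ⟨w, hw⟩ := exists_mem_alcove hx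
    exact hf.eq_zero_on_alcove h0 w x hw
  exact congrFun (Continuous.ext_on dense_regPts hf.1.1 continuous_const hreg)

/-- if `f ∈ sol^γ_λ` vanishes at the origin then `f = 0`. -/
theorem statement_3 (N : ℕ) (hN : 1 ≤ N) (γ : ℝ) (lam : Fin N → ℂ)
    (f : Fn N) (hf : memSol γ lam f) (h0 : f (fun _ => 0) = 0) :
    ∀ x : Pt N, f x = 0 :=
  statement_3_general N γ lam f hf h0

end
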